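/- Let F be ℝ or ℂ, let n ≥ 4, and let s be a finite-dimensional solvable Lie algebra over F whose nilradical is isomorphic to n_{n,1}. Then n ≤ dim s ≤ n+2; in particular, if s is not nilpotent then dim s = n+1 or dim s = n+2. -/

import Mathlib

/-!
Let `V m = span (e 1, …, e m)`. For a derivation `D` of `N`, the relations `⁅e j, e k⁆ = 0`
(`j, k < n`) force the `e n`-coefficient of `D (e j)` to vanish for `j < n`, and then
`e (k - 1) = ⁅e k, e n⁆` forces the `e (n - 1)`-coefficient of `D (e j)` to vanish for
`j < n - 1`. So on the last two coordinates `D` is triangular, with diagonal entries `λ D` at `e n`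
and `μ D` at `e (n - 1)`; hence `λ` and `μ` vanish on commutators of derivations. If
`λ D = μ D = 0`, the same recursion gives `D (V k) ≤ V (k - 1)`.

Thus `x ↦ (λ, μ) (ad x|N)` is a linear map `S → F²` killing `⁅S, S⁆` and `N`, whose kernel `K`
is an ideal acting on `N` by lowering the flag `V`. Going down the derived series of `K`
(solvability), every term `J` with `⁅J, J⁆ ≤ N` makes `N ⊔ J` nilpotent by Engel's theorem, so
`J ≤ N` by maximality of `N`. Hence `K = N` and `dim S ≤ n + 2`; and `dim S = n` forces `S = N`.
-/

/-- The family `e 1, …, e n` is a basis of `L` realizing the Lie brackets of the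
nilpotent Lie algebra `n_{n,1}`. -/
def IsNn1Basis (F : Type*) [Field F] (n : ℕ) {L : Type*} [LieRing L] [LieAlgebra F L]
    (e : ℕ → L) : Prop :=
  LinearIndependent F (fun i : Fin n => e (i.val + 1)) ∧
  Submodule.span F (Set.range (fun i : Fin n => e (i.val + 1))) = ⊤ ∧
  (∀ j k : ℕ, 1 ≤ j → j ≤ n - 1 → 1 ≤ k → k ≤ n - 1 → ⁅e j, e k⁆ = 0) ∧
  ⁅e 1, e n⁆ = 0 ∧
  (∀ k : ℕ, 2 ≤ k → k ≤ n - 1 → ⁅e k, e n⁆ = e (k - 1))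

open Module Submodule

namespace IsNn1Basis

variable {F : Type*} [Field F] {n : ℕ} {L : Type*} [LieRing L] [LieAlgebra F L] {e : ℕ → L}

variable (F) in
def flag (e : ℕ → L) (m : ℕ) : Submodule F L := span F (e '' Set.Icc 1 m)

lemma flag_le_iff {m : ℕ} {P : Submodule F L} :
    flag F e m ≤ P ↔ ∀ k, 1 ≤ k → k ≤ m → e k ∈ P := by
  rw [flag, span_le, Set.image_subset_iff]
  simp only [Set.subset_def, Set.mem_preimage, Set.mem_Icc, SetLike.mem_coe, and_imp]

lemma e_mem_flag {k m : ℕ} (h₁ : 1 ≤ k) (h₂ : k ≤ m) : e k ∈ flag F e m :=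
  subset_span ⟨k, ⟨h₁, h₂⟩, rfl⟩

lemma flag_mono : Monotone (flag F e) := fun _ _ h =>
  span_mono (Set.image_mono (Set.Icc_subset_Icc_right h))

lemma flag_zero : flag F e 0 = ⊥ := by simp [flag]

variable (he : IsNn1Basis F n e)
include he

noncomputable def basis : Basis (Fin n) F L := .mk he.1 he.2.1.ge

lemma basis_apply (i : Fin n) : he.basis i = e (i + 1) := Basis.mk_apply _ _ _

lemma finrank_eq : finrank F L = n := by
  rw [finrank_eq_card_basis he.basis, Fintype.card_fin]

/-- The coefficient of `e k`; it is `0` for `k ∉ [1, n]`. -/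
noncomputable def coord (k : ℕ) : L →ₗ[F] F :=
  if h : 1 ≤ k ∧ k ≤ n then he.basis.coord ⟨k - 1, by omega⟩ else 0

lemma coord_succ (i : Fin n) : he.coord (i + 1) = he.basis.coord i := by
  rw [coord, dif_pos (by omega)]; rfl

lemma coord_e {k : ℕ} (h₁ : 1 ≤ k) (h₂ : k ≤ n) (m : ℕ) :
    he.coord m (e k) = if m = k then 1 else 0 := by
  obtain ⟨i, rfl⟩ : ∃ i : Fin n, i.val + 1 = k := ⟨⟨k - 1, by omega⟩, by simp; omega⟩
  rw [← he.basis_apply]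
  by_cases hm : 1 ≤ m ∧ m ≤ n
  · obtain ⟨j, rfl⟩ : ∃ j : Fin n, j.val + 1 = m := ⟨⟨m - 1, by omega⟩, by simp; omega⟩
    simp [coord_succ, Basis.coord_apply, Finsupp.single_apply, Fin.ext_iff, eq_comm]
  · rw [coord, dif_neg hm, if_neg (by omega), LinearMap.zero_apply]

lemma linearMap_ext {M : Type*} [AddCommGroup M] [Module F M] {f g : L →ₗ[F] M}
    (h : ∀ k, 1 ≤ k → k ≤ n → f (e k) = g (e k)) : f = g :=
  he.basis.ext fun i => by rw [basis_apply]; exact h _ (by omega) i.isLt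

lemma flag_eq_top {m : ℕ} (hm : n ≤ m) : flag F e m = ⊤ := by
  rw [eq_top_iff, ← he.2.1, span_le]
  rintro _ ⟨i, rfl⟩
  exact e_mem_flag (by omega) (by omega)

lemma mem_flag_iff {m : ℕ} {y : L} :
    y ∈ flag F e m ↔ ∀ k, m < k → k ≤ n → he.coord k y = 0 := by
  constructor
  · intro hy k hmk hkn
    have : flag F e m ≤ LinearMap.ker (he.coord k) := flag_le_iff.2 fun j hj₁ hjm => by
      rw [LinearMap.mem_ker, he.coord_e hj₁ (by omega), if_neg (by omega)]
    exact this hy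
  · intro h
    rw [← he.basis.sum_repr y]
    refine sum_mem fun i _ => ?_
    by_cases hi : m < i + 1
    · rw [← Basis.coord_apply, ← coord_succ, h _ hi (by omega), zero_smul]
      exact zero_mem _
    · rw [basis_apply]
      exact smul_mem _ _ (e_mem_flag (by omega) (by omega))

lemma lie_e_eq_smul {j : ℕ} (hj₁ : 1 ≤ j) (hj₂ : j ≤ n - 1) (y : L) :
    ⁅e j, y⁆ = he.coord n y • ⁅e j, e n⁆ := by
  have : LieAlgebra.ad F L (e j) = (he.coord n).smulRight ⁅e j, e n⁆ :=
    he.linearMap_ext fun k hk₁ hk₂ => by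
      rcases hk₂.eq_or_lt with rfl | hk
      · simp [he.coord_e hk₁ le_rfl]
      · simp [he.coord_e hk₁ hk₂, hk.ne', he.2.2.1 j k hj₁ hj₂ hk₁ (by omega)]
  exact LinearMap.congr_fun this y

/-- The `min` records `⁅e n, e n⁆ = 0`: every `⁅y, e n⁆` lies in `V (n - 2)`. -/
lemma lie_e_last_mem_flag {m : ℕ} (hm : m ≤ n) {y : L} (hy : y ∈ flag F e m) :
    ⁅y, e n⁆ ∈ flag F e (min m (n - 1) - 1) := by
  have : flag F e m ≤ (flag F e (min m (n - 1) - 1)).comap (-LieAlgebra.ad F L (e n)) :=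
    flag_le_iff.2 fun k hk₁ hkm => by
      rw [mem_comap, LinearMap.neg_apply, LieAlgebra.ad_apply, lie_skew]
      by_cases hk : k = 1 ∨ k = n
      · rcases hk with rfl | rfl
        · rw [he.2.2.2.1]; exact zero_mem _
        · rw [lie_self]; exact zero_mem _
      · rw [he.2.2.2.2 k (by omega) (by omega)]
        exact e_mem_flag (by omega) (by omega)
  have := this hy
  rwa [mem_comap, LinearMap.neg_apply, LieAlgebra.ad_apply, lie_skew] at this

lemma coord_lie_e_last_eq_zero {k : ℕ} (hk : n - 1 ≤ k) (y : L) : he.coord k ⁅y, e n⁆ = 0 := by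
  by_cases hk' : 1 ≤ k ∧ k ≤ n
  · have hy := he.lie_e_last_mem_flag le_rfl (he.flag_eq_top le_rfl ▸ mem_top : y ∈ flag F e n)
    exact he.mem_flag_iff.1 hy k (by omega) hk'.2
  · rw [coord, dif_neg hk', LinearMap.zero_apply]

noncomputable def diag (k : ℕ) : LieDerivation F L L →ₗ[F] F where
  toFun D := he.coord k (D (e k))
  map_add' _ _ := by simp
  map_smul' _ _ := by simp

variable (hn : 4 ≤ n) (D : LieDerivation F L L)

lemma apply_e_sub_one {k : ℕ} (hk₁ : 2 ≤ k) (hk₂ : k ≤ n - 1) :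
    D (e (k - 1)) = ⁅D (e k), e n⁆ + he.diag n D • e (k - 1) := by
  have := D.apply_lie_eq_add (e k) (e n)
  rwa [he.2.2.2.2 k hk₁ hk₂, he.lie_e_eq_smul (by omega) hk₂, he.2.2.2.2 k hk₁ hk₂, add_comm]
    at this

lemma coord_pred_last_apply_e_eq_zero {j : ℕ} (hj₁ : 1 ≤ j) (hj₂ : j ≤ n - 2) :
    he.coord (n - 1) (D (e j)) = 0 := by
  have h := he.apply_e_sub_one D (k := j + 1) (by omega) (by omega)
  rw [Nat.add_sub_cancel] at h
  rw [h, map_add, he.coord_lie_e_last_eq_zero le_rfl, map_smul, he.coord_e hj₁ (by omega),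
    if_neg (by omega), smul_zero, add_zero]

lemma coord_pred_last_apply (y : L) :
    he.coord (n - 1) (D y) =
      he.coord (n - 1) y * he.diag (n - 1) D + he.coord n y * he.coord (n - 1) (D (e n)) := by
  have : he.coord (n - 1) ∘ₗ (D : L →ₗ[F] L) =
      he.diag (n - 1) D • he.coord (n - 1) + he.coord (n - 1) (D (e n)) • he.coord n :=
    he.linearMap_ext fun k hk₁ hk₂ => by
      rcases hk₂.eq_or_lt with rfl | hk
      · simp (disch := omega) [he.coord_e hk₁ le_rfl, if_neg]
      rcases (Nat.le_sub_one_of_lt hk).eq_or_lt with rfl | hk'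
      · simp (disch := omega) [diag, he.coord_e hk₁ hk₂, if_neg]
      · simp (disch := omega) [he.coord_pred_last_apply_e_eq_zero D hk₁ (by omega),
          he.coord_e hk₁ hk₂, if_neg]
  simpa [mul_comm] using LinearMap.congr_fun this y

noncomputable def diagTop : LieDerivation F L L →ₗ[F] F × F := (he.diag n).prod (he.diag (n - 1))

lemma diagTop_apply : he.diagTop D = (he.diag n D, he.diag (n - 1) D) := rfl

include hn

/-- Comparing the coefficients of `e n` in `D ⁅e j, e k⁆ = 0` for two indices `k ∈ {2, 3}`. -/
lemma coord_last_apply_e_eq_zero {j : ℕ} (hj₁ : 1 ≤ j) (hj₂ : j ≤ n - 1) :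
    he.coord n (D (e j)) = 0 := by
  have hrel : ∀ k, 1 ≤ k → k ≤ n - 1 →
      he.coord n (D (e j)) • ⁅e k, e n⁆ = he.coord n (D (e k)) • ⁅e j, e n⁆ := fun k hk₁ hk₂ => by
    have := D.apply_lie_eq_add (e j) (e k)
    rw [he.2.2.1 j k hj₁ hj₂ hk₁ hk₂, map_zero, he.lie_e_eq_smul hj₁ hj₂, ← lie_skew (D (e j)),
      he.lie_e_eq_smul hk₁ hk₂, eq_comm, add_neg_eq_zero] at this
    exact this.symm
  have key : ∀ k, 2 ≤ k → k ≤ n - 1 → k ≠ j → he.coord n (D (e j)) = 0 := fun k hk₁ hk₂ hkj => by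
    have := congrArg (he.coord (k - 1)) (hrel k (by omega) hk₂)
    rw [he.2.2.2.2 k hk₁ hk₂, map_smul, map_smul, he.coord_e (by omega) (by omega), if_pos rfl,
      smul_eq_mul, mul_one] at this
    rw [this]
    rcases hj₁.eq_or_lt with rfl | hj
    · rw [he.2.2.2.1, map_zero, smul_zero]
    · rw [he.2.2.2.2 j hj hj₂, he.coord_e (by omega) (by omega), if_neg (by omega), smul_zero]
  by_cases hj : j = 2
  · exact key 3 (by omega) (by omega) (by omega)
  · exact key 2 le_rfl (by omega) (Ne.symm hj)

lemma coord_last_apply (y : L) : he.coord n (D y) = he.coord n y * he.diag n D := by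
  have : he.coord n ∘ₗ (D : L →ₗ[F] L) = he.diag n D • he.coord n :=
    he.linearMap_ext fun k hk₁ hk₂ => by
      rcases hk₂.eq_or_lt with rfl | hk
      · simp [diag, he.coord_e hk₁ le_rfl]
      · simp [he.coord_last_apply_e_eq_zero hn D hk₁ (by omega), he.coord_e hk₁ hk₂, hk.ne']
  simpa [mul_comm] using LinearMap.congr_fun this y

lemma diagTop_lie (D₁ D₂ : LieDerivation F L L) : he.diagTop ⁅D₁, D₂⁆ = 0 := by
  have h₁ := he.coord_last_apply_e_eq_zero hn D₁ (j := n - 1) (by omega) le_rfl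
  have h₂ := he.coord_last_apply_e_eq_zero hn D₂ (j := n - 1) (by omega) le_rfl
  simp only [diagTop_apply, diag, LinearMap.coe_mk, AddHom.coe_mk, Prod.mk_eq_zero,
    LieDerivation.commutator_apply, map_sub]
  rw [he.coord_last_apply hn D₁ (D₂ _), he.coord_last_apply hn D₂ (D₁ _),
    he.coord_pred_last_apply D₁ (D₂ _), he.coord_pred_last_apply D₂ (D₁ _), h₁, h₂]
  simp only [diag, LinearMap.coe_mk, AddHom.coe_mk]
  constructor <;> ring

lemma diagTop_ad (x : L) : he.diagTop (LieDerivation.ad F L x) = 0 := by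
  have h : he.coord (n - 1) (e (n - 1 - 1)) = 0 := by
    rw [he.coord_e (by omega) (by omega), if_neg (by omega)]
  simp only [diagTop_apply, diag, LinearMap.coe_mk, AddHom.coe_mk, LieDerivation.ad_apply_apply,
    Prod.mk_eq_zero]
  refine ⟨he.coord_lie_e_last_eq_zero (by omega) x, ?_⟩
  rw [← lie_skew, he.lie_e_eq_smul (by omega) le_rfl, he.2.2.2.2 (n - 1) (by omega) le_rfl,
    map_neg, map_smul, h, smul_zero, neg_zero]

variable {D} (hD : he.diagTop D = 0)
include hD

lemma apply_e_mem_flag {k : ℕ} (hk₁ : 1 ≤ k) (hk₂ : k ≤ n) : D (e k) ∈ flag F e (k - 1) := by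
  obtain ⟨hlast, hpred⟩ := Prod.mk_eq_zero.1 hD
  rcases hk₂.eq_or_lt with rfl | hk
  · exact he.mem_flag_iff.2 fun m hm hmk => (by omega : m = k) ▸ hlast
  have hk' := Nat.le_sub_one_of_lt hk
  clear hk
  induction hk' using Nat.decreasingInduction with
  | self =>
    refine he.mem_flag_iff.2 fun m hm hmn => ?_
    rcases hmn.eq_or_lt with rfl | hmn
    · exact he.coord_last_apply_e_eq_zero hn D hk₁ le_rfl
    · exact (by omega : m = n - 1) ▸ hpred
  | of_succ k hk' ih =>
    have hrec := he.apply_e_sub_one D (k := k + 1) (by omega) (by omega)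
    rw [Nat.add_sub_cancel, hlast, zero_smul, add_zero] at hrec
    have := he.lie_e_last_mem_flag (by omega) (ih (by omega) (by omega))
    rwa [Nat.add_sub_cancel, min_eq_left (by omega), ← hrec] at this

lemma apply_mem_flag_sub_one {m : ℕ} {y : L} (hy : y ∈ flag F e m) : D y ∈ flag F e (m - 1) := by
  rcases le_or_gt m n with hm | hm
  · have : flag F e m ≤ (flag F e (m - 1)).comap (D : L →ₗ[F] L) := flag_le_iff.2 fun k hk₁ hkm =>
      flag_mono (by omega) (he.apply_e_mem_flag hn hD hk₁ (by omega))
    exact this hy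
  · rw [he.flag_eq_top (by omega)]
    exact mem_top

end IsNn1Basis

section LieIdeal

variable {R S : Type*} [CommRing R] [LieRing S] [LieAlgebra R S]

def LinearMap.lieIdealKer {M : Type*} [AddCommGroup M] [Module R M] (f : S →ₗ[R] M)
    (hf : ∀ x y : S, f ⁅x, y⁆ = 0) : LieIdeal R S :=
  { LinearMap.ker f with lie_mem := fun {x y} _ => hf x y }

def LieIdeal.adDerivation (N : LieIdeal R S) : S →ₗ⁅R⁆ LieDerivation R N N where
  toFun x :=
    { toLinearMap := LieModule.toEnd R S N x
      leibniz' := fun a b => by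
        ext
        simp only [LieModule.toEnd_apply_apply, LieSubmodule.coe_sub,
          LieIdeal.coe_bracket_of_module, LieSubmodule.coe_bracket]
        rw [leibniz_lie, ← lie_skew (b : S)]
        abel }
  map_add' _ _ := by ext; simp
  map_smul' _ _ := by ext; simp
  map_lie' := by intro x y; ext; simp

@[simp]
lemma LieIdeal.coe_adDerivation_apply (N : LieIdeal R S) (x : S) (y : N) :
    ((LieIdeal.adDerivation N x y : N) : S) = ⁅x, (y : S)⁆ := rfl

lemma LieIdeal.adDerivation_coe (N : LieIdeal R S) (x : N) :
    LieIdeal.adDerivation N x = LieDerivation.ad R N x := by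
  ext; simp

lemma LieIdeal.lie_sup_self_le {N J : LieIdeal R S} (h : ⁅J, J⁆ ≤ N) : ⁅N ⊔ J, N ⊔ J⁆ ≤ N := by
  rw [LieSubmodule.sup_lie]
  refine sup_le (LieSubmodule.lie_le_left N _) ?_
  rw [LieSubmodule.lie_sup]
  exact sup_le (LieSubmodule.lie_le_right N J) h

lemma LieIdeal.isNilpotent_of_lie_mem_chain [IsNoetherian R S] (J : LieIdeal R S)
    (C : ℕ → Submodule R S) (M : ℕ) (hC : C 0 = ⊥) (hJ : ∀ x ∈ J, ∀ y ∈ J, ⁅x, y⁆ ∈ C M)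
    (hstep : ∀ x ∈ J, ∀ m, ∀ y ∈ C (m + 1), ⁅x, y⁆ ∈ C m) : LieRing.IsNilpotent J := by
  refine (LieAlgebra.isNilpotent_iff_forall (R := R)).2 fun x => ⟨M + 1, LinearMap.ext fun y => ?_⟩
  have key : ∀ k ≤ M, ((LieAlgebra.ad R J x ^ (k + 1)) y : S) ∈ C (M - k) := by
    intro k hk
    induction k with
    | zero => exact hJ x x.2 y y.2
    | succ k ih =>
      rw [pow_succ', Module.End.mul_apply]
      exact hstep x x.2 _ _ ((by omega : M - k = M - (k + 1) + 1) ▸ ih (by omega))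
  have := key M le_rfl
  rw [Nat.sub_self, hC, mem_bot] at this
  exact Subtype.ext this

lemma LieIdeal.le_of_forall_lie_self_le (hS : LieAlgebra.IsSolvable S) {K N : LieIdeal R S}
    (h : ∀ J ≤ K, ⁅J, J⁆ ≤ N → J ≤ N) : K ≤ N := by
  obtain ⟨k, hk⟩ := (LieAlgebra.isSolvable_iff R S).1 hS
  have hbot : LieAlgebra.derivedSeriesOfIdeal R S k K ≤ N := by
    have := LieAlgebra.derivedSeriesOfIdeal_mono (le_top : K ≤ ⊤) k
    rw [← LieAlgebra.derivedSeries_def, hk] at this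
    exact this.trans bot_le
  have : ∀ i ≤ k, LieAlgebra.derivedSeriesOfIdeal R S i K ≤ N := fun i hi => by
    induction hi using Nat.decreasingInduction with
    | self => exact hbot
    | of_succ i _ ih =>
      exact h _ (LieAlgebra.derivedSeriesOfIdeal_le_self K i)
        (by rwa [← LieAlgebra.derivedSeriesOfIdeal_succ])
  exact this 0 (Nat.zero_le k)

end LieIdeal

lemma IsNn1Basis.lie_mem_map_flag {F : Type*} [Field F] {n : ℕ} {S : Type*} [LieRing S]
    [LieAlgebra F S] {N : LieIdeal F S} {e : ℕ → N}
    (he : IsNn1Basis F n e) (hn : 4 ≤ n) {x : S} (hx : he.diagTop (LieIdeal.adDerivation N x) = 0)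
    {m : ℕ} {y : S} (hy : y ∈ (flag F e (m + 1)).map N.toSubmodule.subtype) :
    ⁅x, y⁆ ∈ (flag F e m).map N.toSubmodule.subtype := by
  obtain ⟨y, hy, rfl⟩ := hy
  have hmem := he.apply_mem_flag_sub_one hn hx hy
  have hcoe : N.toSubmodule.subtype (LieIdeal.adDerivation N x y) = ⁅x, N.toSubmodule.subtype y⁆ :=
    LieIdeal.coe_adDerivation_apply N x y
  rw [← hcoe]
  exact mem_map_of_mem hmem

lemma LinearMap.finrank_le_finrank_add_of_ker_le {K V W : Type*} [DivisionRing K]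
    [AddCommGroup V] [Module K V] [AddCommGroup W] [Module K W] [FiniteDimensional K V]
    [FiniteDimensional K W] (f : V →ₗ[K] W) {U : Submodule K V} (h : LinearMap.ker f ≤ U) :
    finrank K V ≤ finrank K U + finrank K W := by
  have := f.finrank_range_add_finrank_ker
  have := Submodule.finrank_mono h
  have := Submodule.finrank_le (LinearMap.range f)
  omega

section Nilradical

variable {F S : Type*} [Field F] [LieRing S] [LieAlgebra F S] [FiniteDimensional F S]

lemma LieIdeal.isNilpotent_of_finrank_eq {N : LieIdeal F S} (hN : LieRing.IsNilpotent N)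
    (h : finrank F N = finrank F S) : LieRing.IsNilpotent S := by
  obtain rfl : N = ⊤ :=
    LieSubmodule.toSubmodule_injective (Submodule.eq_top_of_finrank_eq h)
  exact LieIdeal.topEquiv.nilpotent_iff_equiv_nilpotent.mp hN

/-- The kernel `K` of `f` is an ideal. Along the derived series of `K`, each term `J` with
`⁅J, J⁆ ≤ N` makes `N ⊔ J` nilpotent (Engel), hence `J ≤ N`; so `K ≤ N`. -/
lemma LieIdeal.finrank_le_finrank_add_of_lie_mem_chain {V : Type*} [AddCommGroup V]
    [Module F V] [FiniteDimensional F V] (hS : LieAlgebra.IsSolvable S) (N : LieIdeal F S)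
    (hNmax : ∀ I : LieIdeal F S, LieRing.IsNilpotent I → I ≤ N) (f : S →ₗ[F] V)
    (hf : ∀ x y : S, f ⁅x, y⁆ = 0) (hfN : ∀ x ∈ N, f x = 0) (C : ℕ → Submodule F S) (M : ℕ)
    (hC : C 0 = ⊥) (hNC : ∀ x ∈ N, x ∈ C M)
    (hstep : ∀ x : S, f x = 0 → ∀ m, ∀ y ∈ C (m + 1), ⁅x, y⁆ ∈ C m) :
    finrank F S ≤ finrank F N + finrank F V := by
  have hNK : N ≤ f.lieIdealKer hf := fun x hx => hfN x hx
  have hKN : f.lieIdealKer hf ≤ N := LieIdeal.le_of_forall_lie_self_le hS fun J hJK hJJ =>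
    le_sup_right.trans <| hNmax _ <| LieIdeal.isNilpotent_of_lie_mem_chain _ C M hC
      (fun x hx y hy => hNC _ (LieIdeal.lie_sup_self_le hJJ (LieSubmodule.lie_mem_lie hx hy)))
      fun x hx => hstep x (sup_le hNK hJK hx)
  exact LinearMap.finrank_le_finrank_add_of_ker_le f (U := N.toSubmodule) hKN

end Nilradical

/-- Over `F = ℝ` or `ℂ`, a finite-dimensional solvable Lie algebra
`S` whose nilradical is isomorphic to `n_{n,1}` (n ≥ 4) satisfies
`n ≤ dim S ≤ n + 2`; if moreover `S` is not nilpotent then `dim S = n+1` or `n+2`. -/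
theorem solvable_with_nilradical_nn1_dim_bound
    (F : Type*) [RCLike F] (n : ℕ) (hn : 4 ≤ n)
    (S : Type*) [LieRing S] [LieAlgebra F S] [FiniteDimensional F S]
    (hsolv : LieAlgebra.IsSolvable S)
    (N : LieIdeal F S)
    (hNnil : LieModule.IsNilpotent N N)
    (hNmax : ∀ I : LieIdeal F S, LieModule.IsNilpotent I I → I ≤ N)
    (e : ℕ → N) (he : IsNn1Basis F n e) :
    n ≤ Module.finrank F S ∧ Module.finrank F S ≤ n + 2 ∧
    (¬ LieModule.IsNilpotent S S →
      Module.finrank F S = n + 1 ∨ Module.finrank F S = n + 2) := by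
  have hN : finrank F N = n := he.finrank_eq
  have hS : finrank F S ≤ n + 2 := by
    have := LieIdeal.finrank_le_finrank_add_of_lie_mem_chain hsolv N hNmax
      (he.diagTop ∘ₗ (LieIdeal.adDerivation N : S →ₗ[F] LieDerivation F N N))
      (fun x y => by simp [he.diagTop_lie hn])
      (fun x hx => by simpa [LieIdeal.adDerivation_coe N ⟨x, hx⟩] using he.diagTop_ad hn ⟨x, hx⟩)
      (fun m => (IsNn1Basis.flag F e m).map N.toSubmodule.subtype) n
      (by simp [IsNn1Basis.flag_zero])
      (fun x hx => ⟨⟨x, hx⟩, by simp [he.flag_eq_top le_rfl], rfl⟩)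
      fun x hx m y hy => he.lie_mem_map_flag hn hx hy
    simpa [hN] using this
  have hle : n ≤ finrank F S := hN ▸ N.toSubmodule.finrank_le
  refine ⟨hle, hS, fun hnil => ?_⟩
  have : finrank F S ≠ n := fun h =>
    hnil (LieIdeal.isNilpotent_of_finrank_eq hNnil (hN.trans h.symm))
  omega
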